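/- Let M be a von Neumann algebra acting on a complex Hilbert space H and let α : M → M be a unital, normal *-endomorphism. Then an operator Y ∈ B(H) satisfies the α-boundedness condition for some constant C ≥ 0 if and only if Y T = α(T) Y for all T ∈ M; moreover, in that case the α-boundedness condition holds with constant C = ‖Y‖². Consequently the Arveson correspondence E_α equals {Y ∈ B(H) : YT = α(T)Y for all T ∈ M}. -/

import Mathlib

/-!
For a `*`-homomorphism `α` one has `∑ᵢⱼ ⟨hᵢ, α(Sᵢ* Sⱼ) hⱼ⟩ = ‖∑ᵢ α(Sᵢ) hᵢ‖²`. If `Y` intertwines,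
then `∑ᵢ Sᵢ Y* hᵢ = Y* ∑ᵢ α(Sᵢ) hᵢ`, which gives the bound with constant `‖Y‖²`. Conversely,
the pair `S₁ = S`, `S₂ = 1` with `h₁ = v`, `h₂ = -α(S) v` makes `∑ᵢ α(Sᵢ) hᵢ` vanish, so the
bound forces `S Y* v = Y* α(S) v`, the adjoint form of the intertwining relation.
-/

open scoped ComplexOrder
open ContinuousLinearMap

noncomputable section

/-- Positivity of an `n × n` operator matrix `(a i j)`, regarded as an operator on the
`n`-fold direct sum `Hⁿ`: `∑ᵢⱼ ⟨kᵢ, a i j kⱼ⟩ ≥ 0` for all `k₁, …, kₙ ∈ H`. -/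
def PosOpMatrix {H : Type*} [NormedAddCommGroup H] [InnerProductSpace ℂ H] {n : ℕ}
    (a : Fin n → Fin n → (H →L[ℂ] H)) : Prop :=
  ∀ k : Fin n → H, 0 ≤ ∑ i, ∑ j, (inner ℂ (k i) (a i j (k j)) : ℂ)

/-- Complete positivity of a map relative to a von Neumann algebra `M`: positive operator
matrices with entries in `M` are sent to positive operator matrices. -/
def IsCPOn {H : Type*} [NormedAddCommGroup H] [InnerProductSpace ℂ H] [CompleteSpace H]
    (M : VonNeumannAlgebra H) (P : (H →L[ℂ] H) → (H →L[ℂ] H)) : Prop :=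
  ∀ (n : ℕ) (a : Fin n → Fin n → (H →L[ℂ] H)),
    (∀ i j, a i j ∈ M) → PosOpMatrix a → PosOpMatrix fun i j => P (a i j)

/-- Weak-operator continuity of a map on bounded subsets of `s`; for bounded linear maps on
von Neumann algebras this captures normality (σ-weak continuity). -/
def WOTContinuousOnBalls {H K : Type*} [NormedAddCommGroup H] [InnerProductSpace ℂ H]
    [NormedAddCommGroup K] [InnerProductSpace ℂ K]
    (s : Set (H →L[ℂ] H)) (f : (H →L[ℂ] H) → (K →L[ℂ] K)) : Prop :=
  ∀ r : ℝ, ContinuousOn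
    (fun T : H →WOT[ℂ] H =>
      ContinuousLinearMapWOT.ofCLM (f (ContinuousLinearMapWOT.toCLM T)))
    ((ContinuousLinearMapWOT.ofCLM : (H →L[ℂ] H) → H →WOT[ℂ] H) '' (s ∩ Metric.closedBall 0 r))

/-- The closure of a set of operators in the weak operator topology. -/
def WOTClosure {H K : Type*} [NormedAddCommGroup H] [InnerProductSpace ℂ H]
    [NormedAddCommGroup K] [InnerProductSpace ℂ K] (s : Set (H →L[ℂ] K)) : Set (H →L[ℂ] K) :=
  (ContinuousLinearMapWOT.ofCLM : (H →L[ℂ] K) → H →WOT[ℂ] K) ⁻¹' closure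
    ((ContinuousLinearMapWOT.ofCLM : (H →L[ℂ] K) → H →WOT[ℂ] K) '' s)

/-- A unital normal `*`-representation of (the elements of) a von Neumann algebra `M` on a
Hilbert space `K`, encoded as a function on all of `B(H)` whose properties are imposed only on
members of `M`. -/
structure IsNormalRepOn {H K : Type*} [NormedAddCommGroup H] [InnerProductSpace ℂ H]
    [CompleteSpace H] [NormedAddCommGroup K] [InnerProductSpace ℂ K] [CompleteSpace K]
    (M : VonNeumannAlgebra H) (π : (H →L[ℂ] H) → (K →L[ℂ] K)) : Prop where
  map_add : ∀ S ∈ M, ∀ T ∈ M, π (S + T) = π S + π T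
  map_smul : ∀ (c : ℂ), ∀ T ∈ M, π (c • T) = c • π T
  map_mul : ∀ S ∈ M, ∀ T ∈ M, π (S * T) = π S * π T
  map_star : ∀ T ∈ M, π (star T) = star (π T)
  map_one : π 1 = 1
  normal : WOTContinuousOnBalls (M : Set (H →L[ℂ] H)) π

/-- A completely positive linear map of a von Neumann algebra `M` into itself. -/
structure IsCPMapOn {H : Type*} [NormedAddCommGroup H] [InnerProductSpace ℂ H] [CompleteSpace H]
    (M : VonNeumannAlgebra H) (P : (H →L[ℂ] H) → (H →L[ℂ] H)) : Prop where
  map_mem : ∀ T ∈ M, P T ∈ M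
  map_add : ∀ S ∈ M, ∀ T ∈ M, P (S + T) = P S + P T
  map_smul : ∀ (c : ℂ), ∀ T ∈ M, P (c • T) = c • P T
  cp : IsCPOn M P

/-- A normal, unital, completely positive map on a von Neumann algebra `M`. -/
structure IsUNCPMapOn {H : Type*} [NormedAddCommGroup H] [InnerProductSpace ℂ H] [CompleteSpace H]
    (M : VonNeumannAlgebra H) (P : (H →L[ℂ] H) → (H →L[ℂ] H))
    extends IsCPMapOn M P : Prop where
  map_one : P 1 = 1
  normal : WOTContinuousOnBalls (M : Set (H →L[ℂ] H)) P

/-- A Stinespring triple `(π, K, W)` for `P`: `π` is a unital normal `*`-representation of `M`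
on `K`, `W : H → K` is an isometry, and `P T = W* (π T) W` for `T ∈ M`. -/
structure IsStinespring {H K : Type*} [NormedAddCommGroup H] [InnerProductSpace ℂ H]
    [CompleteSpace H] [NormedAddCommGroup K] [InnerProductSpace ℂ K] [CompleteSpace K]
    (M : VonNeumannAlgebra H) (P : (H →L[ℂ] H) → (H →L[ℂ] H))
    (π : (H →L[ℂ] H) → (K →L[ℂ] K)) (W : H →L[ℂ] K) : Prop where
  rep : IsNormalRepOn M π
  isometry : ∀ h : H, ‖W h‖ = ‖h‖
  dilation : ∀ T ∈ M, P T = ContinuousLinearMap.adjoint W ∘L (π T ∘L W)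

/-- A minimal Stinespring triple: additionally `{π(T) W h}` has dense span in `K`. -/
structure IsMinimalStinespring {H K : Type*} [NormedAddCommGroup H] [InnerProductSpace ℂ H]
    [CompleteSpace H] [NormedAddCommGroup K] [InnerProductSpace ℂ K] [CompleteSpace K]
    (M : VonNeumannAlgebra H) (P : (H →L[ℂ] H) → (H →L[ℂ] H))
    (π : (H →L[ℂ] H) → (K →L[ℂ] K)) (W : H →L[ℂ] K)
    extends IsStinespring M P π W : Prop where
  minimal :
    (Submodule.span ℂ {k : K | ∃ T ∈ M, ∃ h : H, k = π T (W h)}).topologicalClosure = ⊤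

/-- The `P`-boundedness condition with constant `C` for an operator `Y ∈ B(H)`:
`‖∑ᵢ Sᵢ Y* hᵢ‖² ≤ C ∑ᵢⱼ ⟨hᵢ, P(Sᵢ* Sⱼ) hⱼ⟩` for all `Sᵢ ∈ M` and `hᵢ ∈ H`. -/
def PBound {H : Type*} [NormedAddCommGroup H] [InnerProductSpace ℂ H] [CompleteSpace H]
    (M : VonNeumannAlgebra H) (P : (H →L[ℂ] H) → (H →L[ℂ] H))
    (Y : H →L[ℂ] H) (C : ℝ) : Prop :=
  ∀ (n : ℕ) (S : Fin n → (H →L[ℂ] H)), (∀ i, S i ∈ M) → ∀ h : Fin n → H,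
    ((‖∑ i, S i (ContinuousLinearMap.adjoint Y (h i))‖ ^ 2 : ℝ) : ℂ) ≤
      (C : ℂ) * ∑ i, ∑ j, (inner ℂ (h i) (P (star (S i) * S j) (h j)) : ℂ)

/-- The Arveson correspondence of `P`: all `Y ∈ B(H)` satisfying the `P`-boundedness
condition with some nonnegative constant. -/
def ArvesonCorrespondence {H : Type*} [NormedAddCommGroup H] [InnerProductSpace ℂ H]
    [CompleteSpace H] (M : VonNeumannAlgebra H) (P : (H →L[ℂ] H) → (H →L[ℂ] H)) :
    Set (H →L[ℂ] H) :=
  {Y | ∃ C : ℝ, 0 ≤ C ∧ PBound M P Y C}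

/-- A cp-semigroup on `M`: a semigroup `{P_t}_{t ≥ 0}` of unital, normal, completely positive
maps on `M` with `P_0 = id`. -/
structure IsCpSemigroup {H : Type*} [NormedAddCommGroup H] [InnerProductSpace ℂ H]
    [CompleteSpace H] (M : VonNeumannAlgebra H)
    (P : ℝ → (H →L[ℂ] H) → (H →L[ℂ] H)) : Prop where
  uncp : ∀ t : ℝ, 0 ≤ t → IsUNCPMapOn M (P t)
  id_zero : ∀ T ∈ M, P 0 T = T
  comp : ∀ s t : ℝ, 0 ≤ s → 0 ≤ t → ∀ T ∈ M, P (t + s) T = P t (P s T)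

/-- Weak continuity of a cp-semigroup: `t ↦ ⟨P_t(a) h, k⟩` is continuous on `[0, ∞)`. -/
def IsWeaklyContinuousSemigroup {H : Type*} [NormedAddCommGroup H] [InnerProductSpace ℂ H]
    [CompleteSpace H] (M : VonNeumannAlgebra H)
    (P : ℝ → (H →L[ℂ] H) → (H →L[ℂ] H)) : Prop :=
  ∀ T ∈ M, ∀ h k : H,
    ContinuousOn (fun t : ℝ => (inner ℂ ((P t T) h) k : ℂ)) (Set.Ici (0 : ℝ))

/-- A semigroup `{α_t}_{t ≥ 0}` of unital, normal `*`-endomorphisms of a von Neumann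
algebra `R`, with `α_0 = id`. -/
structure IsEndoSemigroup {K : Type*} [NormedAddCommGroup K] [InnerProductSpace ℂ K]
    [CompleteSpace K] (R : VonNeumannAlgebra K)
    (α : ℝ → (K →L[ℂ] K) → (K →L[ℂ] K)) : Prop where
  rep : ∀ t : ℝ, 0 ≤ t → IsNormalRepOn R (α t)
  map_mem : ∀ t : ℝ, 0 ≤ t → ∀ S ∈ R, α t S ∈ R
  id_zero : ∀ S ∈ R, α 0 S = S
  comp : ∀ s t : ℝ, 0 ≤ s → 0 ≤ t → ∀ S ∈ R, α (t + s) S = α t (α s S)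

namespace IsNormalRepOn

variable {H : Type*} [NormedAddCommGroup H] [InnerProductSpace ℂ H] [CompleteSpace H]
  {M : VonNeumannAlgebra H}

theorem sum_inner_star_mul_eq_norm_sq {K : Type*} [NormedAddCommGroup K]
    [InnerProductSpace ℂ K] [CompleteSpace K] {π : (H →L[ℂ] H) → (K →L[ℂ] K)}
    (hπ : IsNormalRepOn M π) {n : ℕ} {S : Fin n → (H →L[ℂ] H)} (hS : ∀ i, S i ∈ M)
    (k : Fin n → K) :
    ∑ i, ∑ j, inner ℂ (k i) (π (star (S i) * S j) (k j)) =
      ((‖∑ i, π (S i) (k i)‖ ^ 2 : ℝ) : ℂ) := by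
  have hterm : ∀ i j, inner ℂ (k i) (π (star (S i) * S j) (k j)) =
      inner ℂ (π (S i) (k i)) (π (S j) (k j)) := fun i j => by
    rw [hπ.map_mul _ (star_mem (hS i)) _ (hS j), hπ.map_star _ (hS i), mul_apply_eq_comp,
      star_eq_adjoint, adjoint_inner_right]
  simp_rw [hterm, ← inner_sum, ← sum_inner, inner_self_eq_norm_sq_to_K]
  norm_cast

variable {α : (H →L[ℂ] H) → (H →L[ℂ] H)}

theorem intertwines_iff_star (hα : IsNormalRepOn M α) (Y : H →L[ℂ] H) :
    (∀ T ∈ M, Y * T = α T * Y) ↔ ∀ T ∈ M, T * star Y = star Y * α T := by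
  have hstar : ∀ T ∈ M, Y * star T = α (star T) * Y ↔ T * star Y = star Y * α T :=
    fun T hT => by rw [hα.map_star T hT, ← star_inj, star_mul, star_mul, star_star, star_star]
  refine ⟨fun h T hT => (hstar T hT).1 (h _ (star_mem hT)), fun h T hT => ?_⟩
  simpa using (hstar (star T) (star_mem hT)).2 (h _ (star_mem hT))

theorem pBound_of_intertwines (hα : IsNormalRepOn M α) {Y : H →L[ℂ] H}
    (hY : ∀ T ∈ M, Y * T = α T * Y) : PBound M α Y (‖Y‖ ^ 2) := by
  intro n S hS h
  have hYstar := (hα.intertwines_iff_star Y).1 hY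
  have hsum : ∑ i, S i (adjoint Y (h i)) = adjoint Y (∑ i, α (S i) (h i)) := by
    rw [map_sum]
    refine Finset.sum_congr rfl fun i _ => ?_
    simpa only [star_eq_adjoint, mul_apply_eq_comp] using congr($(hYstar (S i) (hS i)) (h i))
  rw [hsum, hα.sum_inner_star_mul_eq_norm_sq hS, ← Complex.ofReal_mul, Complex.real_le_real,
    ← mul_pow, ← norm_star Y, star_eq_adjoint]
  gcongr
  exact le_opNorm _ _

theorem intertwines_of_pBound (hα : IsNormalRepOn M α) {Y : H →L[ℂ] H} {C : ℝ}
    (hC : PBound M α Y C) : ∀ T ∈ M, Y * T = α T * Y := by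
  refine (hα.intertwines_iff_star Y).2 fun S hS => ContinuousLinearMap.ext fun v => ?_
  have hmem : ∀ i, ![S, 1] i ∈ M := Fin.forall_fin_two.2 ⟨hS, one_mem M⟩
  have hbound := hC 2 ![S, 1] hmem ![v, -α S v]
  rw [hα.sum_inner_star_mul_eq_norm_sq hmem] at hbound
  simp only [Fin.sum_univ_two, Matrix.cons_val_zero, Matrix.cons_val_one, hα.map_one,
    one_apply_eq_self, add_neg_cancel, norm_zero, map_neg, ← sub_eq_add_neg] at hbound
  have hdiff : ‖S (adjoint Y v) - adjoint Y (α S v)‖ ^ 2 ≤ 0 := by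
    rwa [zero_pow two_ne_zero, Complex.ofReal_zero, mul_zero, ← Complex.ofReal_zero,
      Complex.real_le_real] at hbound
  rw [mul_apply_eq_comp, mul_apply_eq_comp, star_eq_adjoint, ← sub_eq_zero, ← norm_eq_zero]
  exact pow_eq_zero_iff two_ne_zero |>.1 (hdiff.antisymm (sq_nonneg _))

end IsNormalRepOn

theorem arveson_of_endomorphism_general {H : Type*} [NormedAddCommGroup H] [InnerProductSpace ℂ H]
    [CompleteSpace H] (M : VonNeumannAlgebra H)
    (α : (H →L[ℂ] H) → (H →L[ℂ] H))
    (hα : IsNormalRepOn M α) :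
    (∀ Y : H →L[ℂ] H,
      (∃ C : ℝ, 0 ≤ C ∧ PBound M α Y C) ↔ (∀ T ∈ M, Y * T = α T * Y)) ∧
    (∀ Y : H →L[ℂ] H, (∀ T ∈ M, Y * T = α T * Y) → PBound M α Y (‖Y‖ ^ 2)) ∧
    ArvesonCorrespondence M α = {Y : H →L[ℂ] H | ∀ T ∈ M, Y * T = α T * Y} := by
  have hE : ∀ Y : H →L[ℂ] H,
      (∃ C : ℝ, 0 ≤ C ∧ PBound M α Y C) ↔ (∀ T ∈ M, Y * T = α T * Y) := fun Y =>
    ⟨fun ⟨_, _, hC⟩ => hα.intertwines_of_pBound hC,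
      fun hY => ⟨‖Y‖ ^ 2, sq_nonneg _, hα.pBound_of_intertwines hY⟩⟩
  exact ⟨hE, fun _ => hα.pBound_of_intertwines, Set.ext hE⟩

/-- for a unital normal `*`-endomorphism `α` of `M`, the `α`-boundedness
condition (for some nonnegative constant) is equivalent to the intertwining relation
`Y T = α(T) Y` on `M`, in which case the constant `‖Y‖²` works; hence
`E_α = {Y : YT = α(T)Y for all T ∈ M}`. -/
theorem arveson_of_endomorphism {H : Type*} [NormedAddCommGroup H] [InnerProductSpace ℂ H]
    [CompleteSpace H] (M : VonNeumannAlgebra H)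
    (α : (H →L[ℂ] H) → (H →L[ℂ] H))
    (hα : IsNormalRepOn M α) (hmem : ∀ T ∈ M, α T ∈ M) :
    (∀ Y : H →L[ℂ] H,
      (∃ C : ℝ, 0 ≤ C ∧ PBound M α Y C) ↔ (∀ T ∈ M, Y * T = α T * Y)) ∧
    (∀ Y : H →L[ℂ] H, (∀ T ∈ M, Y * T = α T * Y) → PBound M α Y (‖Y‖ ^ 2)) ∧
    ArvesonCorrespondence M α = {Y : H →L[ℂ] H | ∀ T ∈ M, Y * T = α T * Y} :=
  arveson_of_endomorphism_general M α hα
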